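/- For the Ha-Kye map $\Phi : M_2(\mathbb{C}) \to M_4(\mathbb{C})$ and the associated Hermitian polynomial $\mathbf{W}(x,y) = x^\dagger \Phi(y y^\dagger) x$, the curve $x(\alpha) = (2\alpha(1-\alpha),\; \alpha[4 - 2(\alpha + \bar\alpha) + 3|\alpha|^2],\; -4 - 2|\alpha|^2,\; -\bar\alpha(2+\alpha)) \in \mathbb{C}^4$ satisfies $\mathbf{W}(x(\alpha), (1,\alpha)) = 0$ for every $\alpha \in \mathbb{C}$. -/

import Mathlib

open Matrix Complex

/-- The Ha–Kye positive map `Φ : M₂(ℂ) → M₄(ℂ)`. -/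
def haKye (M : Matrix (Fin 2) (Fin 2) ℂ) : Matrix (Fin 4) (Fin 4) ℂ :=
  let x := M 0 0; let y := M 0 1; let z := M 1 0; let w := M 1 1
  !![3*w + 4*x - 2*y - 2*z, 2*z - 2*x, 0, 0;
     2*y - 2*x, 2*x, z, 0;
     0, y, 2*w, -w - 2*z;
     0, 0, -w - 2*y, 2*w + 4*x]

/-- The Hermitian polynomial `W(x,y) = x† Φ(y y†) x` associated to the Ha–Kye map. -/
noncomputable def W (x : Fin 4 → ℂ) (y : Fin 2 → ℂ) : ℂ :=
  dotProduct (star x) ((haKye (vecMulVec y (star y))).mulVec x)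

/-- The explicit curve of zeros of the Ha–Kye polynomial `W`:
`W(x(α), (1, α)) = 0` for all `α ∈ ℂ`. -/
theorem stmt_13 (α : ℂ) :
    W ![2*α*(1 - α),
        α * (4 - 2*(α + starRingEnd ℂ α) + 3 * (normSq α : ℂ)),
        -4 - 2 * (normSq α : ℂ),
        -(starRingEnd ℂ α) * (2 + α)]
      ![1, α] = 0 := by
  simp only [W, haKye, dotProduct, mulVec, vecMulVec, Fin.sum_univ_four,
    Matrix.cons_val', Matrix.cons_val_zero, Matrix.cons_val_one, Matrix.head_cons,
    Matrix.cons_val_fin_one, Matrix.empty_val', Matrix.head_fin_const, Matrix.cons_val_two, Matrix.cons_val_three, Matrix.tail_cons,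
    Pi.star_apply, Matrix.of_apply, Matrix.cons_val_succ, RCLike.star_def]
  rw [Complex.normSq_eq_conj_mul_self]
  simp only [_root_.map_mul, _root_.map_add, _root_.map_sub, _root_.map_neg, _root_.map_one, _root_.map_ofNat, Complex.conj_conj]
  ring
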